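/- Let (X_t) be strictly stationary with mean zero, ∑_h |γ(h)| < ∞, and absolutely summable fourth-order cumulants. Let I_{t,b}(λ) = (2πb)^{-1} |∑_{s=1}^b X_{t+s−1} e^{-iλs}|² and f̃_b(λ) = N^{-1} ∑_{t=1}^N I_{t,b}(λ) with N = n − b + 1. Then Var(f̃_b(λ)) ≤ C b / N uniformly over λ, for some constant C independent of n, b, λ. -/

import Mathlib

/-!
Expand `f̃_b(λ)` as a quadratic form `∑ w_p X_{a_p} X_{b_p}` over the `N b²` triples
`p = (t, s, s')`, with weights `|w_p| ≤ (2π b N)⁻¹`. By stationarity,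
`Cov(X_a X_b, X_c X_d) = κ₄(b - a, c - a, d - a) + γ(c - a) γ(d - b) + γ(d - a) γ(c - b)`.
In the double sum over pairs `(p, q)`, the pair is determined by `t, s`, one position of `q` and
the three lags of the cumulant term, so these terms add up to at most `N b² ∑ |κ₄|`; it is
determined by `t, s, s'`, one position of `q` and the two lags of a product of autocovariances,
so each such product adds up to at most `N b³ (∑ |γ|)²`. Hence
`Var f̃_b(λ) ≤ (2π b N)⁻² (N b² ∑ |κ₄| + 2 N b³ (∑ |γ|)²) ≤ C b / N`.
-/

open MeasureTheory ProbabilityTheory Real Complex Finset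

/-- Fourth joint cumulant of mean-zero random variables. -/
noncomputable def cum4 {Ω : Type*} [MeasurableSpace Ω] (P : Measure Ω)
    (Y1 Y2 Y3 Y4 : Ω → ℝ) : ℝ :=
  (∫ ω, Y1 ω * Y2 ω * Y3 ω * Y4 ω ∂P)
    - (∫ ω, Y1 ω * Y2 ω ∂P) * (∫ ω, Y3 ω * Y4 ω ∂P)
    - (∫ ω, Y1 ω * Y3 ω ∂P) * (∫ ω, Y2 ω * Y4 ω ∂P)
    - (∫ ω, Y1 ω * Y4 ω ∂P) * (∫ ω, Y2 ω * Y3 ω ∂P)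

def IsStrictlyStationary {Ω : Type*} [MeasurableSpace Ω] (P : Measure Ω) (X : ℤ → Ω → ℝ) :
    Prop :=
  ∀ (m : ℕ) (t : Fin m → ℤ) (s : ℤ),
    Measure.map (fun ω (i : Fin m) => X (t i + s) ω) P
      = Measure.map (fun ω (i : Fin m) => X (t i) ω) P

section Moments

variable {Ω : Type*} [MeasurableSpace Ω] {P : Measure Ω}

theorem memLp_two_mul_of_integrable_pow_four {f g : Ω → ℝ} (hf : AEStronglyMeasurable f P)
    (hg : AEStronglyMeasurable g P) (hf4 : Integrable (fun ω => f ω ^ 4) P)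
    (hg4 : Integrable (fun ω => g ω ^ 4) P) :
    MemLp (fun ω => f ω * g ω) 2 P := by
  refine (memLp_two_iff_integrable_sq (hf.mul hg)).2
    ((hf4.add hg4).mono' ((hf.mul hg).pow 2) ?_)
  filter_upwards with ω
  rw [Real.norm_eq_abs, abs_of_nonneg (sq_nonneg _), Pi.add_apply, Pi.mul_apply]
  nlinarith [sq_nonneg (f ω ^ 2 - g ω ^ 2)]

theorem variance_weighted_sum_le [IsFiniteMeasure P] {ι : Type*} (T : Finset ι) (w : ι → ℝ)
    {Y : ι → Ω → ℝ} (hY : ∀ i, MemLp (Y i) 2 P) {A : ℝ} (hw : ∀ i ∈ T, |w i| ≤ A) :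
    Var[fun ω => ∑ i ∈ T, w i * Y i ω; P] ≤ A ^ 2 * ∑ i ∈ T, ∑ j ∈ T, |cov[Y i, Y j; P]| := by
  have hwY : ∀ i ∈ T, MemLp (fun ω => w i * Y i ω) 2 P := fun i _ => (hY i).const_mul (w i)
  rw [← covariance_self (memLp_finsetSum T hwY).aemeasurable,
    covariance_fun_sum_fun_sum' hwY hwY, mul_sum]
  refine sum_le_sum fun i hi => ?_
  rw [mul_sum]
  refine sum_le_sum fun j hj => ?_
  have hA : 0 ≤ A := (abs_nonneg _).trans (hw i hi)
  rw [covariance_const_mul_left, covariance_const_mul_right]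
  calc w i * (w j * cov[Y i, Y j; P]) ≤ |w i| * (|w j| * |cov[Y i, Y j; P]|) := by
        rw [← abs_mul, ← abs_mul]; exact le_abs_self _
    _ ≤ A ^ 2 * |cov[Y i, Y j; P]| := by
        rw [sq, mul_assoc]
        gcongr
        exacts [hw i hi, hw j hj]

end Moments

namespace IsStrictlyStationary

variable {Ω : Type*} [MeasurableSpace Ω] {P : Measure Ω} {X : ℤ → Ω → ℝ}

theorem identDistrib (hX : IsStrictlyStationary P X) (hmeas : ∀ t, Measurable (X t)) (m : ℕ)
    (t : Fin m → ℤ) (s : ℤ) :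
    IdentDistrib (fun ω i => X (t i + s) ω) (fun ω i => X (t i) ω) P P where
  aemeasurable_fst := (measurable_pi_lambda _ fun _ => hmeas _).aemeasurable
  aemeasurable_snd := (measurable_pi_lambda _ fun _ => hmeas _).aemeasurable
  map_eq := hX m t s

theorem integrable_pow_four (hX : IsStrictlyStationary P X) (hmeas : ∀ t, Measurable (X t))
    (h0 : Integrable (fun ω => X 0 ω ^ 4) P) (t : ℤ) : Integrable (fun ω => X t ω ^ 4) P := by
  have h := (hX.identDistrib hmeas 1 ![0] t).comp (u := fun v => v 0 ^ 4) (by fun_prop)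
  simpa [Function.comp_def] using h.integrable_iff.2 (by simpa [Function.comp_def] using h0)

theorem integral_mul_four (hX : IsStrictlyStationary P X) (hmeas : ∀ t, Measurable (X t))
    (a b c d : ℤ) :
    ∫ ω, X a ω * X b ω * X c ω * X d ω ∂P
      = ∫ ω, X 0 ω * X (b - a) ω * X (c - a) ω * X (d - a) ω ∂P := by
  have h := (hX.identDistrib hmeas 4 ![0, b - a, c - a, d - a] a).comp
    (u := fun v => v 0 * v 1 * v 2 * v 3) (by fun_prop)
  simpa using h.integral_eq

theorem covariance_mul_mul [IsProbabilityMeasure P] (hX : IsStrictlyStationary P X)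
    (hmeas : ∀ t, Measurable (X t)) (h4 : ∀ t, Integrable (fun ω => X t ω ^ 4) P)
    {γ : ℤ → ℝ} (hγ : ∀ t h : ℤ, ∫ ω, X t ω * X (t + h) ω ∂P = γ h) (a b c d : ℤ) :
    cov[fun ω => X a ω * X b ω, fun ω => X c ω * X d ω; P]
      = cum4 P (X 0) (X (b - a)) (X (c - a)) (X (d - a))
        + γ (c - a) * γ (d - b) + γ (d - a) * γ (c - b) := by
  have hL2 : ∀ a b, MemLp (fun ω => X a ω * X b ω) 2 P := fun a b =>
    memLp_two_mul_of_integrable_pow_four (hmeas a).aestronglyMeasurable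
      (hmeas b).aestronglyMeasurable (h4 a) (h4 b)
  have hpair : ∀ a b, ∫ ω, X a ω * X b ω ∂P = γ (b - a) := fun a b => by
    simpa using hγ a (b - a)
  have hquad : ∫ ω, (X a ω * X b ω) * (X c ω * X d ω) ∂P
      = ∫ ω, X 0 ω * X (b - a) ω * X (c - a) ω * X (d - a) ω ∂P := by
    simp_rw [← mul_assoc]
    exact hX.integral_mul_four hmeas a b c d
  rw [covariance_eq_sub (hL2 a b) (hL2 c d)]
  simp only [Pi.mul_apply]
  rw [hquad, cum4]
  simp only [hpair]
  ring_nf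

theorem variance_quadraticForm_le [IsProbabilityMeasure P] (hX : IsStrictlyStationary P X)
    (hmeas : ∀ t, Measurable (X t)) (h4 : ∀ t, Integrable (fun ω => X t ω ^ 4) P)
    {γ : ℤ → ℝ} (hγ : ∀ t h : ℤ, ∫ ω, X t ω * X (t + h) ω ∂P = γ h) {ι : Type*} (T : Finset ι)
    (w : ι → ℝ) (a b : ι → ℤ) {A : ℝ} (hw : ∀ p ∈ T, |w p| ≤ A) :
    Var[fun ω => ∑ p ∈ T, w p * (X (a p) ω * X (b p) ω); P]
      ≤ A ^ 2 * ∑ p ∈ T, ∑ q ∈ T,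
          (|cum4 P (X 0) (X (b p - a p)) (X (a q - a p)) (X (b q - a p))|
            + |γ (a q - a p)| * |γ (b q - b p)| + |γ (b q - a p)| * |γ (a q - b p)|) := by
  refine (variance_weighted_sum_le T w (Y := fun p ω => X (a p) ω * X (b p) ω) (fun p =>
    memLp_two_mul_of_integrable_pow_four (hmeas _).aestronglyMeasurable
      (hmeas _).aestronglyMeasurable (h4 _) (h4 _)) hw).trans ?_
  gcongr with p _ q _
  rw [hX.covariance_mul_mul hmeas h4 hγ, ← abs_mul, ← abs_mul]
  exact (abs_add_le _ _).trans (add_le_add_left (abs_add_le _ _) _)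

end IsStrictlyStationary

theorem sum_le_card_mul_tsum {ι σ κ : Type*} (S : Finset ι) (A : Finset σ) {F : κ → ℝ}
    (hF0 : ∀ k, 0 ≤ F k) (hF : Summable F) (e : ι → σ × κ) (he : Set.InjOn e S)
    (hA : ∀ i ∈ S, (e i).1 ∈ A) :
    ∑ i ∈ S, F (e i).2 ≤ #A * ∑' k, F k := by
  classical
  set K := S.image fun i => (e i).2
  calc ∑ i ∈ S, F (e i).2 = ∑ y ∈ S.image e, F y.2 := by rw [sum_image he]
    _ ≤ ∑ y ∈ A ×ˢ K, F y.2 := by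
        refine sum_le_sum_of_subset_of_nonneg (fun y hy => ?_) fun _ _ _ => hF0 _
        obtain ⟨i, hi, rfl⟩ := mem_image.1 hy
        exact mem_product.2 ⟨hA i hi, mem_image_of_mem _ hi⟩
    _ = #A * ∑ k ∈ K, F k := by rw [sum_product, ← nsmul_eq_mul, ← sum_const]
    _ ≤ #A * ∑' k, F k := by gcongr; exact hF.sum_le_tsum _ fun k _ => hF0 k

/-- `(t, s, s')` stands for the product `X_{t+s-1} X_{t+s'-1}` in the periodogram of the `t`-th
subsample. -/
def subsampleIndex (N b : ℕ) : Finset (ℕ × ℕ × ℕ) := Icc 1 N ×ˢ Icc 1 b ×ˢ Icc 1 b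

namespace subsampleIndex

def time₁ (p : ℕ × ℕ × ℕ) : ℤ := p.1 + p.2.1 - 1

def time₂ (p : ℕ × ℕ × ℕ) : ℤ := p.1 + p.2.2 - 1

variable {N b : ℕ}

theorem sum_sum_three_lags_le {F : ℤ × ℤ × ℤ → ℝ} (hF0 : ∀ k, 0 ≤ F k) (hF : Summable F) :
    ∑ p ∈ subsampleIndex N b, ∑ q ∈ subsampleIndex N b,
        F (time₂ p - time₁ p, time₁ q - time₁ p, time₂ q - time₁ p)
      ≤ N * b ^ 2 * ∑' k, F k := by
  rw [← sum_product']
  refine (sum_le_card_mul_tsum _ (subsampleIndex N b) hF0 hF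
    (fun x : (ℕ × ℕ × ℕ) × (ℕ × ℕ × ℕ) => ((x.1.1, x.1.2.1, x.2.2.1),
      (time₂ x.1 - time₁ x.1, time₁ x.2 - time₁ x.1, time₂ x.2 - time₁ x.1))) ?_ ?_).trans_eq ?_
  · rintro ⟨⟨t, s, s'⟩, ⟨t', u, u'⟩⟩ - ⟨⟨r, v, v'⟩, ⟨r', x, x'⟩⟩ - h
    simp only [Prod.mk.injEq, time₁, time₂] at h ⊢
    omega
  · intro x hx
    simp only [subsampleIndex, mem_product] at hx ⊢
    tauto
  · simp [subsampleIndex, sq, mul_assoc]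

theorem sum_sum_two_lags_le {F : ℤ × ℤ → ℝ} (hF0 : ∀ k, 0 ≤ F k) (hF : Summable F) :
    ∑ p ∈ subsampleIndex N b, ∑ q ∈ subsampleIndex N b,
        F (time₁ q - time₁ p, time₂ q - time₂ p)
      ≤ N * b ^ 3 * ∑' k, F k := by
  rw [← sum_product']
  refine (sum_le_card_mul_tsum _ (subsampleIndex N b ×ˢ Icc 1 b) hF0 hF
    (fun x : (ℕ × ℕ × ℕ) × (ℕ × ℕ × ℕ) => ((x.1, x.2.2.1),
      (time₁ x.2 - time₁ x.1, time₂ x.2 - time₂ x.1))) ?_ ?_).trans_eq ?_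
  · rintro ⟨⟨t, s, s'⟩, ⟨t', u, u'⟩⟩ - ⟨⟨r, v, v'⟩, ⟨r', x, x'⟩⟩ - h
    simp only [Prod.mk.injEq, time₁, time₂] at h ⊢
    omega
  · intro x hx
    simp only [subsampleIndex, mem_product] at hx ⊢
    tauto
  · simp [subsampleIndex, pow_succ, mul_assoc]

theorem sum_sum_two_cross_lags_le {F : ℤ × ℤ → ℝ} (hF0 : ∀ k, 0 ≤ F k) (hF : Summable F) :
    ∑ p ∈ subsampleIndex N b, ∑ q ∈ subsampleIndex N b,
        F (time₂ q - time₁ p, time₁ q - time₂ p)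
      ≤ N * b ^ 3 * ∑' k, F k := by
  rw [← sum_product']
  refine (sum_le_card_mul_tsum _ (subsampleIndex N b ×ˢ Icc 1 b) hF0 hF
    (fun x : (ℕ × ℕ × ℕ) × (ℕ × ℕ × ℕ) => ((x.1, x.2.2.2),
      (time₂ x.2 - time₁ x.1, time₁ x.2 - time₂ x.1))) ?_ ?_).trans_eq ?_
  · rintro ⟨⟨t, s, s'⟩, ⟨t', u, u'⟩⟩ - ⟨⟨r, v, v'⟩, ⟨r', x, x'⟩⟩ - h
    simp only [Prod.mk.injEq, time₁, time₂] at h ⊢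
    omega
  · intro x hx
    simp only [subsampleIndex, mem_product] at hx ⊢
    tauto
  · simp [subsampleIndex, pow_succ, mul_assoc]

theorem sum_sum_autocov_le {γ : ℤ → ℝ} (hγ : Summable fun h => |γ h|) :
    ∑ p ∈ subsampleIndex N b, ∑ q ∈ subsampleIndex N b,
        |γ (time₁ q - time₁ p)| * |γ (time₂ q - time₂ p)|
      + ∑ p ∈ subsampleIndex N b, ∑ q ∈ subsampleIndex N b,
        |γ (time₂ q - time₁ p)| * |γ (time₁ q - time₂ p)|
      ≤ 2 * N * b ^ 3 * (∑' h, |γ h|) ^ 2 := by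
  have hγγ : Summable fun h : ℤ × ℤ => |γ h.1| * |γ h.2| :=
    hγ.mul_of_nonneg hγ (fun _ => abs_nonneg _) (fun _ => abs_nonneg _)
  have htsum : (∑' h, |γ h|) ^ 2 = ∑' h : ℤ × ℤ, |γ h.1| * |γ h.2| := by
    rw [sq, hγ.tsum_mul_tsum hγ hγγ]
  have h0 : ∀ h : ℤ × ℤ, 0 ≤ |γ h.1| * |γ h.2| := fun _ => by positivity
  rw [htsum]
  linarith [sum_sum_two_lags_le (N := N) (b := b) (F := fun h => |γ h.1| * |γ h.2|) h0 hγγ,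
    sum_sum_two_cross_lags_le (N := N) (b := b) (F := fun h => |γ h.1| * |γ h.2|) h0 hγγ]

end subsampleIndex

open ComplexConjugate in
theorem norm_sum_mul_exp_sq {ι : Type*} (S : Finset ι) (x θ : ι → ℝ) :
    ‖∑ s ∈ S, (x s : ℂ) * exp (-I * θ s)‖ ^ 2
      = ∑ s ∈ S, ∑ s' ∈ S, x s * x s' * Real.cos (θ s - θ s') := by
  have hterm : ∀ s s', (x s : ℂ) * exp (-I * θ s) * conj ((x s' : ℂ) * exp (-I * θ s'))
      = ((x s * x s' : ℝ) : ℂ) * exp (((θ s' - θ s : ℝ) : ℂ) * I) := by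
    intro s s'
    rw [map_mul, Complex.conj_ofReal, ← Complex.exp_conj, map_mul, map_neg, Complex.conj_I,
      Complex.conj_ofReal, mul_mul_mul_comm, ← Complex.exp_add]
    push_cast
    ring_nf
  rw [← Complex.ofReal_re (_ ^ 2), Complex.ofReal_pow, ← Complex.mul_conj', map_sum, sum_mul_sum]
  simp only [hterm, Complex.re_sum, Complex.re_ofReal_mul, Complex.exp_ofReal_mul_I_re]
  exact sum_congr rfl fun s _ => sum_congr rfl fun s' _ => by rw [← Real.cos_neg, neg_sub]

open subsampleIndex in
theorem bartlettAverage_eq_sum {Ω : Type*} (X : ℤ → Ω → ℝ) (N b : ℕ) (lam : ℝ) (ω : Ω) :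
    (1 / (N : ℝ)) * ∑ t ∈ Icc 1 N, (1 / (2 * π * b)) *
        ‖∑ s ∈ Icc 1 b, (X ((t : ℤ) + (s : ℤ) - 1) ω : ℂ) * exp (-I * lam * (s : ℕ))‖ ^ 2
      = ∑ p ∈ subsampleIndex N b, (2 * π * b * N)⁻¹ * Real.cos (lam * p.2.1 - lam * p.2.2) *
          (X (time₁ p) ω * X (time₂ p) ω) := by
  simp only [subsampleIndex, sum_product, mul_sum]
  refine sum_congr rfl fun t _ => ?_
  simp_rw [show ∀ s : ℕ, -I * (lam : ℂ) * (s : ℂ) = -I * ((lam * s : ℝ) : ℂ) by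
    intro s; push_cast; ring]
  simp only [norm_sum_mul_exp_sq, mul_sum]
  refine sum_congr rfl fun s _ => sum_congr rfl fun s' _ => ?_
  simp only [time₁, time₂]
  field_simp

theorem bartlett_average_variance_bound_general
    {Ω : Type*} [MeasurableSpace Ω] (P : Measure Ω) [IsProbabilityMeasure P]
    (X : ℤ → Ω → ℝ) (hmeas : ∀ t, Measurable (X t))
    (hstat : ∀ (m : ℕ) (t : Fin m → ℤ) (s : ℤ),
      Measure.map (fun ω (i : Fin m) => X (t i + s) ω) P
        = Measure.map (fun ω (i : Fin m) => X (t i) ω) P)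
    (hmom : Integrable (fun ω => (X 0 ω) ^ 4) P)
    (γ : ℤ → ℝ) (hγ : ∀ t h : ℤ, ∫ ω, X t ω * X (t + h) ω ∂P = γ h)
    (hγsum : Summable (fun h : ℤ => |γ h|))
    (hcumsum : Summable (fun h : ℤ × ℤ × ℤ =>
      |cum4 P (X 0) (X h.1) (X h.2.1) (X h.2.2)|)) :
    ∃ C : ℝ, ∀ b n : ℕ, 1 ≤ b → b ≤ n → ∀ lam : ℝ,
      variance (fun ω =>
        (1 / ((n - b + 1 : ℕ) : ℝ)) * ∑ t ∈ Finset.Icc 1 (n - b + 1),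
          (1 / (2 * π * b)) *
            ‖∑ s ∈ Finset.Icc 1 b,
              (X ((t : ℤ) + (s : ℤ) - 1) ω : ℂ) *
                Complex.exp (-Complex.I * lam * (s : ℕ))‖ ^ 2) P
        ≤ C * b / ((n - b + 1 : ℕ) : ℝ) := by
  have hX : IsStrictlyStationary P X := hstat
  set Γ := ∑' h : ℤ, |γ h|
  set κ : ℤ × ℤ × ℤ → ℝ := fun h => |cum4 P (X 0) (X h.1) (X h.2.1) (X h.2.2)|
  set K := ∑' h, κ h
  refine ⟨(K + 2 * Γ ^ 2) / (4 * π ^ 2), fun b n hb _ lam => ?_⟩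
  have hN : 1 ≤ n - b + 1 := Nat.le_add_left 1 _
  generalize n - b + 1 = N at hN ⊢
  simp_rw [bartlettAverage_eq_sum]
  have hw : ∀ p ∈ subsampleIndex N b,
      |(2 * π * b * N)⁻¹ * Real.cos (lam * p.2.1 - lam * p.2.2)| ≤ (2 * π * b * N)⁻¹ := by
    intro p _
    rw [abs_mul, abs_of_nonneg (by positivity)]
    exact mul_le_of_le_one_right (by positivity) (abs_cos_le_one _)
  refine (hX.variance_quadraticForm_le hmeas (hX.integrable_pow_four hmeas hmom) hγ _ _ _ _
    hw).trans ?_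
  calc _ ≤ ((2 * π * b * N)⁻¹) ^ 2 * (N * b ^ 2 * K + 2 * N * b ^ 3 * Γ ^ 2) := by
        simp only [sum_add_distrib, add_assoc]
        exact mul_le_mul_of_nonneg_left (add_le_add
          (subsampleIndex.sum_sum_three_lags_le (F := κ) (fun _ => abs_nonneg _) hcumsum)
          (subsampleIndex.sum_sum_autocov_le hγsum)) (sq_nonneg _)
    _ ≤ (K + 2 * Γ ^ 2) / (4 * π ^ 2) * b / N := by
        have hK : 0 ≤ K := tsum_nonneg fun _ => abs_nonneg _
        have hb' : (1 : ℝ) ≤ b := by exact_mod_cast hb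
        have hN' : (1 : ℝ) ≤ N := by exact_mod_cast hN
        field_simp
        nlinarith [mul_le_mul_of_nonneg_left hb' hK]

/-- Variance bound for the Bartlett average `f̃_b(λ)` of the periodograms of
the `N = n − b + 1` overlapping subsamples of length `b`:
`Var(f̃_b(λ)) ≤ C b / N` uniformly in `λ`. -/
theorem bartlett_average_variance_bound
    {Ω : Type*} [MeasurableSpace Ω] (P : Measure Ω) [IsProbabilityMeasure P]
    (X : ℤ → Ω → ℝ) (hmeas : ∀ t, Measurable (X t))
    (hstat : ∀ (m : ℕ) (t : Fin m → ℤ) (s : ℤ),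
      Measure.map (fun ω (i : Fin m) => X (t i + s) ω) P
        = Measure.map (fun ω (i : Fin m) => X (t i) ω) P)
    (hmean : ∫ ω, X 0 ω ∂P = 0)
    (hmom : Integrable (fun ω => (X 0 ω) ^ 4) P)
    (γ : ℤ → ℝ) (hγ : ∀ t h : ℤ, ∫ ω, X t ω * X (t + h) ω ∂P = γ h)
    (hγsum : Summable (fun h : ℤ => |γ h|))
    (hcumsum : Summable (fun h : ℤ × ℤ × ℤ =>
      |cum4 P (X 0) (X h.1) (X h.2.1) (X h.2.2)|)) :
    ∃ C : ℝ, ∀ b n : ℕ, 1 ≤ b → b ≤ n → ∀ lam : ℝ,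
      variance (fun ω =>
        (1 / ((n - b + 1 : ℕ) : ℝ)) * ∑ t ∈ Finset.Icc 1 (n - b + 1),
          (1 / (2 * π * b)) *
            ‖∑ s ∈ Finset.Icc 1 b,
              (X ((t : ℤ) + (s : ℤ) - 1) ω : ℂ) *
                Complex.exp (-Complex.I * lam * (s : ℕ))‖ ^ 2) P
        ≤ C * b / ((n - b + 1 : ℕ) : ℝ) :=
  bartlett_average_variance_bound_general P X hmeas hstat hmom γ hγ hγsum hcumsum
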